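/- Let r(n,x) = C_n·x − C_{n+1} where C_n is the Catalan number. Then det((r(i+j, x²))_{i,j=0}^{n}) / det((C_{i+j})_{i,j=0}^{n}) = F_{2n+3}(x, −1), where F_m(x,s) are the Fibonacci polynomials. -/
import Mathlib

open Polynomial Finset Matrix


noncomputable def dd (i k : ℕ) : ℚ :=
  (Nat.choose (2*i) (i+k) : ℚ) - (Nat.choose (2*i) (i+k+1) : ℚ)

lemma dd_eq_zero {i k : ℕ} (h : i < k) : dd i k = 0 := by
  unfold dd
  rw [Nat.choose_eq_zero_of_lt (by omega), Nat.choose_eq_zero_of_lt (by omega)]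
  simp

lemma dd_self (i : ℕ) : dd i i = 1 := by
  unfold dd
  rw [show i + i = 2*i by ring, Nat.choose_self, Nat.choose_eq_zero_of_lt (by omega)]
  simp

lemma catalan_q (N : ℕ) :
    (catalan N : ℚ) = (Nat.choose (2*N) N : ℚ) - (Nat.choose (2*N) (N+1) : ℚ) := by
  have h1 : ((N:ℚ) + 1) * (catalan N : ℚ) = (Nat.choose (2*N) N : ℚ) := by
    have := succ_mul_catalan_eq_centralBinom N
    have : ((N+1) * catalan N : ℕ) = (N.centralBinom : ℕ) := this
    rw [Nat.centralBinom] at this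
    exact_mod_cast congrArg (Nat.cast (R := ℚ)) this
  have h2 : (Nat.choose (2*N) (N+1) : ℚ) * ((N:ℚ)+1) = (Nat.choose (2*N) N : ℚ) * N := by
    have := Nat.choose_succ_right_eq (2*N) N
    rw [show 2*N - N = N by omega] at this
    exact_mod_cast congrArg (Nat.cast (R := ℚ)) this
  have hN : ((N:ℚ)+1) ≠ 0 := by positivity
  nlinarith [h1, h2]

lemma vdm (i j K : ℕ) :
    Nat.choose (2*i + 2*j) K = ∑ a ∈ range (K+1), Nat.choose (2*i) a * Nat.choose (2*j) (K - a) := by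
  rw [Nat.add_choose_eq]
  exact Nat.sum_antidiagonal_eq_sum_range_succ_mk _ K

lemma sum_range_ext {M M' : ℕ} (f : ℕ → ℕ) (h : M ≤ M') (hz : ∀ k, M ≤ k → f k = 0) :
    ∑ k ∈ range M, f k = ∑ k ∈ range M', f k := by
  rw [Finset.sum_subset (Finset.range_subset_range.2 h)]
  intro x hx hx'
  exact hz x (by simpa using hx')

lemma idI (i j : ℕ) :
    Nat.choose (2*(i+j)) (i+j) =
      (∑ k ∈ range (i+j+1), Nat.choose (2*i) (i+k) * Nat.choose (2*j) (j+k))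
      + ∑ k ∈ range (i+j+1), Nat.choose (2*i) (i+k+1) * Nat.choose (2*j) (j+k+1) := by
  have h := vdm i j (i+j)
  rw [show (2*(i+j)) = 2*i+2*j by ring, h,
    show i + j + 1 = i + (j+1) by ring, Finset.sum_range_add]
  have e1 : ∑ x ∈ range (j+1), (Nat.choose (2*i) (i+x) * Nat.choose (2*j) (i+j-(i+x)))
      = ∑ k ∈ range (i+j+1), Nat.choose (2*i) (i+k) * Nat.choose (2*j) (j+k) := by
    rw [Finset.sum_congr rfl (fun x hx => ?_)]
    · exact sum_range_ext _ (by omega) (fun k hk => by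
        rw [Nat.choose_eq_zero_of_lt (show 2*j < j+k by omega), mul_zero])
    · simp only [mem_range] at hx
      rw [show i + j - (i+x) = 2*j - (j + x) by omega, Nat.choose_symm (by omega)]
  have e2 : ∑ x ∈ range i, (Nat.choose (2*i) x * Nat.choose (2*j) (i+j-x))
      = ∑ k ∈ range (i+j+1), Nat.choose (2*i) (i+k+1) * Nat.choose (2*j) (j+k+1) := by
    rw [← Finset.sum_range_reflect]
    rw [Finset.sum_congr rfl (fun x hx => ?_)]
    · exact sum_range_ext _ (show i ≤ i+j+1 by omega) (fun k hk => by
        rw [Nat.choose_eq_zero_of_lt (show 2*i < i+k+1 by omega), zero_mul])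
    · simp only [mem_range] at hx
      congr 1
      · rw [show i - 1 - x = 2*i - (i+x+1) by omega, Nat.choose_symm (by omega)]
      · congr 1; omega
  rw [e1, e2, add_comm]; rfl

lemma idII (i j : ℕ) :
    Nat.choose (2*(i+j)) (i+j+1) =
      (∑ k ∈ range (i+j+1), Nat.choose (2*i) (i+k) * Nat.choose (2*j) (j+k+1))
      + ∑ k ∈ range (i+j+1), Nat.choose (2*i) (i+k+1) * Nat.choose (2*j) (j+k) := by
  have h := vdm i j (i+j+1)
  rw [show (2*(i+j)) = 2*i+2*j by ring, h,
    show i + j + 1 + 1 = (i+1) + (j+1) by ring, Finset.sum_range_add]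
  have e2 : ∑ x ∈ range (j+1), (Nat.choose (2*i) (i+1+x) * Nat.choose (2*j) (i+j+1-(i+1+x)))
      = ∑ k ∈ range (i+j+1), Nat.choose (2*i) (i+k+1) * Nat.choose (2*j) (j+k) := by
    rw [Finset.sum_congr rfl (fun x hx => ?_)]
    · exact sum_range_ext _ (by omega) (fun k hk => by
        rw [Nat.choose_eq_zero_of_lt (show 2*j < j+k by omega), mul_zero])
    · simp only [mem_range] at hx
      congr 1
      · congr 1; omega
      · rw [show i + j + 1 - (i+1+x) = 2*j - (j + x) by omega, Nat.choose_symm (by omega)]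
  have e1 : ∑ x ∈ range (i+1), (Nat.choose (2*i) x * Nat.choose (2*j) (i+j+1-x))
      = ∑ k ∈ range (i+j+1), Nat.choose (2*i) (i+k) * Nat.choose (2*j) (j+k+1) := by
    rw [← Finset.sum_range_reflect]
    rw [Finset.sum_congr rfl (fun x hx => ?_)]
    · exact sum_range_ext _ (show i+1 ≤ i+j+1 by omega) (fun k hk => by
        rw [Nat.choose_eq_zero_of_lt (show 2*i < i+k by omega), zero_mul])
    · simp only [mem_range] at hx
      congr 1
      · rw [show i + 1 - 1 - x = 2*i - (i+x) by omega, Nat.choose_symm (by omega)]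
      · congr 1; omega
  rw [e1, e2]

lemma sum_range_extQ {M M' : ℕ} (f : ℕ → ℚ) (h : M ≤ M') (hz : ∀ k, M ≤ k → f k = 0) :
    ∑ k ∈ range M, f k = ∑ k ∈ range M', f k := by
  rw [Finset.sum_subset (Finset.range_subset_range.2 h)]
  intro x hx hx'
  exact hz x (by simpa using hx')

lemma sum_dd (i j M : ℕ) (hi : i < M) :
    ∑ k ∈ range M, dd i k * dd j k = (catalan (i+j) : ℚ) := by
  have hzero : ∀ k, i + 1 ≤ k → dd i k * dd j k = 0 := fun k hk => by
    rw [dd_eq_zero (by omega), zero_mul]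
  have hM : ∑ k ∈ range M, dd i k * dd j k = ∑ k ∈ range (max M (i+j+1)), dd i k * dd j k :=
    sum_range_extQ _ (le_max_left _ _) (fun k hk => hzero k (by omega))
  have hN : ∑ k ∈ range (i+j+1), dd i k * dd j k = ∑ k ∈ range (max M (i+j+1)), dd i k * dd j k :=
    sum_range_extQ _ (le_max_right _ _) (fun k hk => hzero k (by omega))
  rw [hM, ← hN]
  have expand : ∀ k ∈ range (i+j+1), dd i k * dd j k =
      ((Nat.choose (2*i) (i+k) : ℚ) * Nat.choose (2*j) (j+k)
        + (Nat.choose (2*i) (i+k+1) : ℚ) * Nat.choose (2*j) (j+k+1))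
      - ((Nat.choose (2*i) (i+k) : ℚ) * Nat.choose (2*j) (j+k+1)
        + (Nat.choose (2*i) (i+k+1) : ℚ) * Nat.choose (2*j) (j+k)) := by
    intro k _; unfold dd; ring
  rw [Finset.sum_congr rfl expand, Finset.sum_sub_distrib, Finset.sum_add_distrib,
    Finset.sum_add_distrib, catalan_q (i+j)]
  have c1 := congrArg (Nat.cast (R := ℚ)) (idI i j)
  have c2 := congrArg (Nat.cast (R := ℚ)) (idII i j)
  push_cast at c1 c2
  rw [← c1, ← c2]

lemma pascalQ (n k : ℕ) :
    (Nat.choose (n+1) (k+1) : ℚ) = Nat.choose n k + Nat.choose n (k+1) := by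
  exact_mod_cast congrArg (Nat.cast (R := ℚ)) (Nat.choose_succ_succ n k)

lemma dd_succ_zero (j : ℕ) : dd (j+1) 0 = dd j 0 + dd j 1 := by
  unfold dd
  have h1 : (Nat.choose (2*(j+1)) (j+1+0) : ℚ) = 2 * Nat.choose (2*j+1) (j+1) := by
    rw [show 2*(j+1) = (2*j+1)+1 by ring, show j+1+0 = j+1 from rfl,
      pascalQ (2*j+1) j]
    have hs : Nat.choose (2*j+1) (2*j+1 - (j+1)) = Nat.choose (2*j+1) (j+1) :=
      Nat.choose_symm (by omega)
    rw [show 2*j+1 - (j+1) = j by omega] at hs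
    rw [show ((Nat.choose (2*j+1) j : ℚ)) = (Nat.choose (2*j+1) (j+1) : ℚ) by
      exact_mod_cast congrArg (Nat.cast (R := ℚ)) hs]
    ring
  have h2 : (Nat.choose (2*j+1) (j+1) : ℚ) = Nat.choose (2*j) j + Nat.choose (2*j) (j+1) :=
    pascalQ (2*j) j
  have h3 : (Nat.choose (2*(j+1)) (j+1+0+1) : ℚ)
      = Nat.choose (2*j+1) (j+1) + Nat.choose (2*j+1) (j+2) := by
    rw [show 2*(j+1) = (2*j+1)+1 by ring]
    exact pascalQ (2*j+1) (j+1)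
  have h4 : (Nat.choose (2*j+1) (j+2) : ℚ) = Nat.choose (2*j) (j+1) + Nat.choose (2*j) (j+2) :=
    pascalQ (2*j) (j+1)
  rw [h1, h2, h3, h4, h2]
  ring_nf

lemma dd_succ_succ (j k : ℕ) :
    dd (j+1) (k+1) = dd j k + 2 * dd j (k+1) + dd j (k+2) := by
  unfold dd
  have dbl : ∀ m : ℕ, (Nat.choose (2*(j+1)) (m+2) : ℚ)
      = Nat.choose (2*j) m + 2 * Nat.choose (2*j) (m+1) + Nat.choose (2*j) (m+2) := by
    intro m
    rw [show 2*(j+1) = (2*j+1)+1 by ring, pascalQ (2*j+1) (m+1),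
      pascalQ (2*j) m, pascalQ (2*j) (m+1)]
    ring
  rw [show j+1+(k+1) = (j+k)+2 by ring, show j+k+2+1 = (j+k+1)+2 by ring,
    dbl (j+k), dbl (j+k+1)]
  ring_nf

def Jent (k l : ℕ) : ℚ :=
  if k = l then (if k = 0 then 1 else 2) else if k+1 = l ∨ l+1 = k then 1 else 0

lemma Jent_mul (k l j : ℕ) :
    Jent k l * dd j l =
      (if l = k then (if k = 0 then 1 else 2) * dd j k else 0)
      + (if l = k + 1 then dd j (k+1) else 0)
      + (if l = k - 1 then (if k = 0 then 0 else dd j (k-1)) else 0) := by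
  unfold Jent
  split_ifs <;> first | (exfalso; omega) | (subst_vars; ring)

lemma sum_Jent (n j k : ℕ) (hj : j ≤ n) (hk : k ≤ n) :
    ∑ l ∈ range (n+1), Jent k l * dd j l = dd (j+1) k := by
  rw [Finset.sum_congr rfl (fun l _ => Jent_mul k l j)]
  rw [Finset.sum_add_distrib, Finset.sum_add_distrib,
    Finset.sum_ite_eq' (range (n+1)) k, Finset.sum_ite_eq' (range (n+1)) (k+1),
    Finset.sum_ite_eq' (range (n+1)) (k-1)]
  have hkm : k ∈ range (n+1) := by simp only [mem_range]; omega
  have hkm1 : k - 1 ∈ range (n+1) := by simp only [mem_range]; omega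
  rw [if_pos hkm, if_pos hkm1]
  have hmid : (if k + 1 ∈ range (n+1) then dd j (k+1) else 0) = dd j (k+1) := by
    by_cases h1 : k + 1 ∈ range (n+1)
    · rw [if_pos h1]
    · rw [if_neg h1]
      have hnk : n ≤ k := by simpa [mem_range] using h1
      exact (dd_eq_zero (by omega)).symm
  rw [hmid]
  rcases Nat.eq_zero_or_pos k with h0 | h0
  · subst h0
    rw [if_pos rfl, if_pos rfl, dd_succ_zero]
    ring
  · obtain ⟨k', rfl⟩ : ∃ k', k = k' + 1 := ⟨k-1, by omega⟩
    rw [if_neg (show ¬ (k'+1 = 0) by omega), if_neg (show ¬ (k'+1 = 0) by omega),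
      dd_succ_succ, show k'+1-1 = k' by omega]
    ring

lemma succAbove_one_zero (m : ℕ) : (1 : Fin (m+2)).succAbove 0 = 0 := by simp

lemma succAbove_one_succ (m : ℕ) (j : Fin m) :
    (1 : Fin (m+2)).succAbove j.succ = j.succ.succ := by
  rw [Fin.succAbove_of_le_castSucc]
  simp [Fin.le_def]

lemma det_expand {m : ℕ} (A : Matrix (Fin (m+2)) (Fin (m+2)) (Polynomial ℚ))
    (hrow : ∀ j : Fin m, A 0 j.succ.succ = 0) (hcol : ∀ i : Fin m, A i.succ.succ 0 = 0) :
    A.det = A 0 0 * (A.submatrix Fin.succ Fin.succ).det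
      - A 0 1 * A 1 0 * (((A.submatrix Fin.succ Fin.succ)).submatrix Fin.succ Fin.succ).det := by
  rw [Matrix.det_succ_row_zero, Fin.sum_univ_succ, Fin.sum_univ_succ]
  have hz : ∀ j : Fin m,
      ((-1 : Polynomial ℚ)) ^ ((Fin.succ (Fin.succ j) : Fin (m+2)) : ℕ)
        * A 0 (Fin.succ (Fin.succ j))
        * (A.submatrix Fin.succ (Fin.succAbove (Fin.succ (Fin.succ j)))).det = 0 := by
    intro j
    rw [hrow j, mul_zero, zero_mul]
  rw [Finset.sum_eq_zero (fun j _ => hz j), add_zero]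
  have h1 : (Fin.succ (0 : Fin (m+1)) : Fin (m+2)) = 1 := rfl
  rw [h1]
  set M := A.submatrix Fin.succ (Fin.succAbove (1 : Fin (m+2))) with hM
  have hM00 : M 0 0 = A 1 0 := by
    rw [hM]
    show A (Fin.succ 0) ((1 : Fin (m+2)).succAbove 0) = A 1 0
    rw [succAbove_one_zero]
    rfl
  have hdetM : M.det = A 1 0 *
      (((A.submatrix Fin.succ Fin.succ)).submatrix Fin.succ Fin.succ).det := by
    rw [Matrix.det_succ_column_zero, Fin.sum_univ_succ]
    have hzc : ∀ i : Fin m,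
        ((-1 : Polynomial ℚ)) ^ ((Fin.succ i : Fin (m+1)) : ℕ)
          * M (Fin.succ i) 0 * (M.submatrix (Fin.succAbove (Fin.succ i)) Fin.succ).det = 0 := by
      intro i
      have hMi : M (Fin.succ i) 0 = 0 := by
        rw [hM]
        show A (Fin.succ (Fin.succ i)) ((1 : Fin (m+2)).succAbove 0) = 0
        rw [succAbove_one_zero]
        exact hcol i
      rw [hMi, mul_zero, zero_mul]
    rw [Finset.sum_eq_zero (fun i _ => hzc i), add_zero, hM00]
    have hsub : M.submatrix (Fin.succAbove (0 : Fin (m+1))) Fin.succ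
        = ((A.submatrix Fin.succ Fin.succ)).submatrix Fin.succ Fin.succ := by
      rw [hM, Fin.succAbove_zero]
      refine Matrix.ext (fun i j => ?_)
      show A _ ((1 : Fin (m+2)).succAbove (Fin.succ j)) = A _ _
      rw [succAbove_one_succ]
    rw [hsub]
    simp
  rw [hdetM]
  simp only [Fin.val_zero, pow_zero, one_mul, Fin.val_one, pow_one, Fin.succAbove_zero]
  ring

noncomputable def TD (m : ℕ) : Matrix (Fin m) (Fin m) (Polynomial ℚ) :=
  Matrix.of fun k l => (if (k:ℕ) = (l:ℕ) then X^2 else 0) - C (Jent k l)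

noncomputable def TG (m : ℕ) : Matrix (Fin m) (Fin m) (Polynomial ℚ) :=
  Matrix.of fun k l => (if (k:ℕ) = (l:ℕ) then X^2 else 0) - C (Jent ((k:ℕ)+1) ((l:ℕ)+1))

lemma Jent_shift (k l : ℕ) : Jent (k+1+1) (l+1+1) = Jent (k+1) (l+1) := by
  unfold Jent
  split_ifs <;> first | rfl | (exfalso; omega)

lemma TD_sub (m : ℕ) : (TD (m+1)).submatrix Fin.succ Fin.succ = TG m := by
  refine Matrix.ext (fun k l => ?_)
  show (if ((Fin.succ k : Fin (m+1)):ℕ) = ((Fin.succ l : Fin (m+1)):ℕ) then X^2 else 0)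
      - C (Jent (Fin.succ k) (Fin.succ l)) = _
  rw [Fin.val_succ, Fin.val_succ]
  show (if (k:ℕ)+1 = (l:ℕ)+1 then X^2 else 0) - C (Jent ((k:ℕ)+1) ((l:ℕ)+1)) = _
  by_cases h : (k:ℕ) = (l:ℕ)
  · rw [if_pos (by omega), TG]; rw [Matrix.of_apply, if_pos h]
  · rw [if_neg (by omega), TG]; rw [Matrix.of_apply, if_neg h]

lemma TG_sub (m : ℕ) : (TG (m+1)).submatrix Fin.succ Fin.succ = TG m := by
  refine Matrix.ext (fun k l => ?_)
  show (if ((Fin.succ k : Fin (m+1)):ℕ) = ((Fin.succ l : Fin (m+1)):ℕ) then X^2 else 0)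
      - C (Jent (((Fin.succ k : Fin (m+1)):ℕ)+1) (((Fin.succ l : Fin (m+1)):ℕ)+1)) = _
  rw [Fin.val_succ, Fin.val_succ, Jent_shift]
  by_cases h : (k:ℕ) = (l:ℕ)
  · rw [if_pos (by omega), TG]; rw [Matrix.of_apply, if_pos h]
  · rw [if_neg (by omega), TG]; rw [Matrix.of_apply, if_neg h]

noncomputable def FP : ℕ → Polynomial ℚ
  | 0 => 0
  | 1 => 1
  | (m+2) => X * FP (m+1) - FP m

lemma FP_rec (m : ℕ) : FP (m+2) = X * FP (m+1) - FP m := rfl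

lemma FP_rec4 (m : ℕ) : FP (m+4) = (X^2 - 2) * FP (m+2) - FP m := by
  have h2 : FP (m+4) = X * FP (m+3) - FP (m+2) := FP_rec (m+2)
  have h1 : FP (m+3) = X * FP (m+2) - FP (m+1) := FP_rec (m+1)
  have h0 : FP (m+2) = X * FP (m+1) - FP m := FP_rec m
  rw [h2, h1]
  linear_combination h0

-- entry lemmas
lemma Jent00 : Jent 0 0 = 1 := rfl
lemma Jent01 : Jent 0 1 = 1 := by unfold Jent; norm_num
lemma Jent10 : Jent 1 0 = 1 := by unfold Jent; norm_num
lemma Jent11 : Jent 1 1 = 2 := by unfold Jent; norm_num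
lemma Jent12 : Jent 1 2 = 1 := by unfold Jent; norm_num
lemma Jent21 : Jent 2 1 = 1 := by unfold Jent; norm_num
lemma Jent_far {k l : ℕ} (h : k + 2 ≤ l) : Jent k l = 0 := by
  unfold Jent; split_ifs <;> first | rfl | (exfalso; omega)
lemma Jent_far' {k l : ℕ} (h : l + 2 ≤ k) : Jent k l = 0 := by
  unfold Jent; split_ifs <;> first | rfl | (exfalso; omega)

lemma detTD_rec (m : ℕ) :
    (TD (m+2)).det = (X^2 - 1) * (TG (m+1)).det - (TG m).det := by
  have h := det_expand (TD (m+2))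
    (fun j => by
      show (if (0:ℕ) = ((j.succ.succ : Fin (m+2)):ℕ) then X^2 else 0)
          - C (Jent 0 ((j.succ.succ : Fin (m+2)):ℕ)) = 0
      rw [Fin.val_succ, Fin.val_succ, if_neg (by omega), Jent_far (by omega)]
      simp)
    (fun i => by
      show (if ((i.succ.succ : Fin (m+2)):ℕ) = (0:ℕ) then X^2 else 0)
          - C (Jent ((i.succ.succ : Fin (m+2)):ℕ) 0) = 0
      rw [Fin.val_succ, Fin.val_succ, if_neg (by omega), Jent_far' (by omega)]
      simp)
  rw [h, TD_sub (m+1), TG_sub m]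
  have e00 : TD (m+2) 0 0 = X^2 - 1 := by
    show (if (0:ℕ) = (0:ℕ) then X^2 else 0) - C (Jent 0 0) = X^2 - 1
    rw [if_pos rfl, Jent00, _root_.map_one]
  have e01 : TD (m+2) 0 1 = -1 := by
    show (if ((0 : Fin (m+2)):ℕ) = ((1 : Fin (m+2)):ℕ) then X^2 else 0)
        - C (Jent ((0 : Fin (m+2)):ℕ) ((1 : Fin (m+2)):ℕ)) = -1
    rw [Fin.val_zero, Fin.val_one, if_neg (by omega), Jent01, _root_.map_one]
    ring
  have e10 : TD (m+2) 1 0 = -1 := by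
    show (if ((1 : Fin (m+2)):ℕ) = ((0 : Fin (m+2)):ℕ) then X^2 else 0)
        - C (Jent ((1 : Fin (m+2)):ℕ) ((0 : Fin (m+2)):ℕ)) = -1
    rw [Fin.val_zero, Fin.val_one, if_neg (by omega), Jent10, _root_.map_one]
    ring
  rw [e00, e01, e10]
  ring

lemma detTG_rec (m : ℕ) :
    (TG (m+2)).det = (X^2 - 2) * (TG (m+1)).det - (TG m).det := by
  have h := det_expand (TG (m+2))
    (fun j => by
      show (if (0:ℕ) = ((j.succ.succ : Fin (m+2)):ℕ) then X^2 else 0)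
          - C (Jent (0+1) (((j.succ.succ : Fin (m+2)):ℕ)+1)) = 0
      rw [Fin.val_succ, Fin.val_succ, if_neg (by omega), Jent_far (by omega)]
      simp)
    (fun i => by
      show (if ((i.succ.succ : Fin (m+2)):ℕ) = (0:ℕ) then X^2 else 0)
          - C (Jent (((i.succ.succ : Fin (m+2)):ℕ)+1) (0+1)) = 0
      rw [Fin.val_succ, Fin.val_succ, if_neg (by omega), Jent_far' (by omega)]
      simp)
  rw [h, TG_sub (m+1), TG_sub m]
  have e00 : TG (m+2) 0 0 = X^2 - 2 := by
    show (if (0:ℕ) = (0:ℕ) then X^2 else 0) - C (Jent (0+1) (0+1)) = X^2 - 2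
    rw [if_pos rfl, show Jent (0+1) (0+1) = 2 from Jent11,
      show (2:ℚ) = (1:ℚ)+1 by norm_num, map_add, _root_.map_one]
    ring
  have e01 : TG (m+2) 0 1 = -1 := by
    show (if ((0 : Fin (m+2)):ℕ) = ((1 : Fin (m+2)):ℕ) then X^2 else 0)
        - C (Jent (((0 : Fin (m+2)):ℕ)+1) (((1 : Fin (m+2)):ℕ)+1)) = -1
    rw [Fin.val_zero, Fin.val_one, if_neg (by omega),
      show Jent (0+1) (1+1) = 1 from Jent12, _root_.map_one]
    ring
  have e10 : TG (m+2) 1 0 = -1 := by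
    show (if ((1 : Fin (m+2)):ℕ) = ((0 : Fin (m+2)):ℕ) then X^2 else 0)
        - C (Jent (((1 : Fin (m+2)):ℕ)+1) (((0 : Fin (m+2)):ℕ)+1)) = -1
    rw [Fin.val_zero, Fin.val_one, if_neg (by omega),
      show Jent (1+1) (0+1) = 1 from Jent21, _root_.map_one]
    ring
  rw [e00, e01, e10]
  ring

lemma detTG_val : ∀ m, (TG m).det * X = FP (2*m+2) := by
  have base0 : (TG 0).det * X = FP 2 := by
    rw [Matrix.det_isEmpty]
    show 1 * X = FP 2
    have : FP 2 = X * FP 1 - FP 0 := FP_rec 0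
    rw [this, show FP 1 = 1 from rfl, show FP 0 = 0 from rfl]
    ring
  have base1 : (TG 1).det * X = FP 4 := by
    rw [Matrix.det_fin_one]
    have e : TG 1 0 0 = X^2 - 2 := by
      show (if (0:ℕ) = (0:ℕ) then X^2 else 0) - C (Jent (0+1) (0+1)) = X^2 - 2
      rw [if_pos rfl, show Jent (0+1) (0+1) = 2 from Jent11,
        show (2:ℚ) = (1:ℚ)+1 by norm_num, map_add, _root_.map_one]
      ring
    rw [e]
    have h2 : FP 4 = X * FP 3 - FP 2 := FP_rec 2
    have h1 : FP 3 = X * FP 2 - FP 1 := FP_rec 1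
    have h0 : FP 2 = X * FP 1 - FP 0 := FP_rec 0
    rw [h2, h1, h0, show FP 1 = 1 from rfl, show FP 0 = 0 from rfl]
    ring
  have key : ∀ m, (TG m).det * X = FP (2*m+2) ∧ (TG (m+1)).det * X = FP (2*(m+1)+2) := by
    intro m
    induction m with
    | zero => exact ⟨base0, base1⟩
    | succ k ih =>
      refine ⟨ih.2, ?_⟩
      rw [detTG_rec k, show 2*(k+1+1)+2 = (2*k+2)+4 by ring, FP_rec4 (2*k+2),
        show (2*k+2)+2 = 2*(k+1)+2 by ring, ← ih.1, ← ih.2]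
      ring
  exact fun m => (key m).1

lemma detTD_val : ∀ m, (TD m).det = FP (2*m+1) := by
  intro m
  match m with
  | 0 =>
    rw [Matrix.det_isEmpty]
    rfl
  | 1 =>
    rw [Matrix.det_fin_one]
    show (if (0:ℕ) = (0:ℕ) then X^2 else 0) - C (Jent 0 0) = FP 3
    rw [if_pos rfl, Jent00, _root_.map_one]
    have h1 : FP 3 = X * FP 2 - FP 1 := FP_rec 1
    have h0 : FP 2 = X * FP 1 - FP 0 := FP_rec 0
    rw [h1, h0, show FP 1 = 1 from rfl, show FP 0 = 0 from rfl]
    ring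
  | (m+2) =>
    have hX : (X : Polynomial ℚ) ≠ 0 := X_ne_zero
    apply mul_left_cancel₀ hX
    rw [detTD_rec m]
    have g1 := detTG_val (m+1)
    have g0 := detTG_val m
    have h4 : FP (2*(m+2)+1+1) = X * FP (2*(m+2)+1) - FP (2*(m+2)) := FP_rec (2*(m+2))
    have h5 : FP ((2*m+2)+4) = (X^2-2) * FP ((2*m+2)+2) - FP (2*m+2) := FP_rec4 (2*m+2)
    rw [show 2*(m+2)+1+1 = (2*m+2)+4 by ring] at h4
    rw [show 2*(m+2) = (2*m+2)+2 by ring] at h4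
    rw [show (2*m+2)+2 = 2*(m+1)+2 by ring] at h4 h5
    rw [show 2*(m+1)+2+1 = 2*(m+2)+1 by ring] at h4
    have hgoal : X * FP (2*(m+2)+1) = (X^2-1) * FP (2*(m+1)+2) - FP (2*m+2) := by
      linear_combination h5 - h4
    rw [← g1, ← g0] at hgoal
    linear_combination (-1 : Polynomial ℚ) * hgoal

section Assembly
variable (n : ℕ)

noncomputable def Lq : Matrix (Fin (n+1)) (Fin (n+1)) ℚ :=
  Matrix.of fun i k => dd i k

noncomputable def Jq : Matrix (Fin (n+1)) (Fin (n+1)) ℚ :=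
  Matrix.of fun k l => Jent k l

lemma det_Lq : (Lq n).det = 1 := by
  rw [Matrix.det_of_lowerTriangular (Lq n)
    (fun i j h => dd_eq_zero (show (i:ℕ) < j from h))]
  exact Finset.prod_eq_one (fun i _ => dd_self i)

lemma LLT : Lq n * (Lq n)ᵀ = Matrix.of fun i j : Fin (n+1) => (catalan ((i:ℕ)+(j:ℕ)) : ℚ) := by
  refine Matrix.ext (fun i j => ?_)
  rw [Matrix.mul_apply]
  show ∑ k : Fin (n+1), dd i k * dd j k = (catalan ((i:ℕ)+(j:ℕ)) : ℚ)
  rw [Fin.sum_univ_eq_sum_range (fun k => dd i k * dd j k)]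
  exact sum_dd i j (n+1) i.isLt

lemma LJLT : Lq n * Jq n * (Lq n)ᵀ
    = Matrix.of fun i j : Fin (n+1) => (catalan ((i:ℕ)+(j:ℕ)+1) : ℚ) := by
  rw [Matrix.mul_assoc]
  have hJL : Jq n * (Lq n)ᵀ = Matrix.of fun k j : Fin (n+1) => dd ((j:ℕ)+1) k := by
    refine Matrix.ext (fun k j => ?_)
    rw [Matrix.mul_apply]
    show ∑ l : Fin (n+1), Jent k l * dd j l = dd ((j:ℕ)+1) k
    rw [Fin.sum_univ_eq_sum_range (fun l => Jent k l * dd j l)]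
    exact sum_Jent n j k (by omega) (by omega)
  rw [hJL]
  refine Matrix.ext (fun i j => ?_)
  rw [Matrix.mul_apply]
  show ∑ k : Fin (n+1), dd i k * dd ((j:ℕ)+1) k = (catalan ((i:ℕ)+(j:ℕ)+1) : ℚ)
  rw [Fin.sum_univ_eq_sum_range (fun k => dd i k * dd ((j:ℕ)+1) k)]
  rw [show (i:ℕ)+(j:ℕ)+1 = (i:ℕ)+((j:ℕ)+1) by ring]
  exact sum_dd i ((j:ℕ)+1) (n+1) i.isLt

lemma TD_decomp : TD (n+1) = (X^2 : Polynomial ℚ) • (1 : Matrix (Fin (n+1)) (Fin (n+1)) (Polynomial ℚ))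
    - (Jq n).map (C : ℚ →+* ℚ[X]) := by
  refine Matrix.ext (fun k l => ?_)
  show (if (k:ℕ) = (l:ℕ) then X^2 else 0) - C (Jent k l) = _
  rw [Matrix.sub_apply, Matrix.smul_apply, Matrix.one_apply, Matrix.map_apply]
  show _ = X^2 • (if k = l then (1:Polynomial ℚ) else 0) - C (Jq n k l)
  rw [smul_ite, smul_eq_mul, smul_eq_mul, mul_one, mul_zero]
  congr 1
  · by_cases h : k = l
    · rw [if_pos h, if_pos (by exact_mod_cast congrArg Fin.val h)]
    · rw [if_neg h, if_neg (fun hv => h (Fin.ext hv))]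

theorem catalan_linear_hankel_det_fib_poly_aux (F : ℕ → Polynomial ℚ)
    (hF0 : F 0 = 0) (hF1 : F 1 = 1)
    (hF : ∀ m, F (m + 2) = X * F (m + 1) - F m) :
    (Matrix.of fun i j : Fin (n + 1) =>
        Polynomial.C (catalan ((i : ℕ) + (j : ℕ)) : ℚ) * X ^ 2
          - Polynomial.C (catalan ((i : ℕ) + (j : ℕ) + 1) : ℚ)).det
      = Polynomial.C ((Matrix.of fun i j : Fin (n + 1) =>
          (catalan ((i : ℕ) + (j : ℕ)) : ℚ)).det) * F (2 * n + 3) := by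
  have hFP : ∀ m, F m = FP m := by
    have key : ∀ m, F m = FP m ∧ F (m+1) = FP (m+1) := by
      intro m
      induction m with
      | zero => exact ⟨by rw [hF0]; rfl, by rw [hF1]; rfl⟩
      | succ k ih =>
        refine ⟨ih.2, ?_⟩
        rw [hF k, ih.1, ih.2]
        rfl
    exact fun m => (key m).1
  -- decomposition of the matrix
  set CatA : Matrix (Fin (n+1)) (Fin (n+1)) ℚ :=
    Matrix.of fun i j : Fin (n + 1) => (catalan ((i : ℕ) + (j : ℕ)) : ℚ) with hCatA
  have hdet1 : CatA.det = 1 := by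
    rw [hCatA, ← LLT n, Matrix.det_mul, Matrix.det_transpose, det_Lq n]
    norm_num
  have hdecomp : (Matrix.of fun i j : Fin (n + 1) =>
        Polynomial.C (catalan ((i : ℕ) + (j : ℕ)) : ℚ) * X ^ 2
          - Polynomial.C (catalan ((i : ℕ) + (j : ℕ) + 1) : ℚ))
      = ((Lq n).map (C : ℚ →+* ℚ[X])) * TD (n+1) * (((Lq n)ᵀ).map (C : ℚ →+* ℚ[X])) := by
    rw [TD_decomp, Matrix.mul_sub, Matrix.sub_mul]
    rw [Matrix.mul_smul, Matrix.mul_one, Matrix.smul_mul]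
    rw [← Matrix.map_mul, ← Matrix.map_mul, ← Matrix.map_mul]
    rw [LLT n, LJLT n]
    refine Matrix.ext (fun i j => ?_)
    rw [Matrix.sub_apply, Matrix.smul_apply, Matrix.map_apply, Matrix.map_apply]
    show C ((catalan ((i:ℕ)+(j:ℕ)) : ℚ)) * X^2 - C ((catalan ((i:ℕ)+(j:ℕ)+1) : ℚ))
      = X^2 • C ((catalan ((i:ℕ)+(j:ℕ)) : ℚ)) - C ((catalan ((i:ℕ)+(j:ℕ)+1) : ℚ))
    rw [smul_eq_mul]
    ring
  rw [hdecomp, Matrix.det_mul, Matrix.det_mul]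
  have hLdet : ((Lq n).map (C : ℚ →+* ℚ[X])).det = 1 := by
    rw [show (Lq n).map (C : ℚ →+* ℚ[X]) = (C : ℚ →+* ℚ[X]).mapMatrix (Lq n) from rfl,
      ← RingHom.map_det, det_Lq n, _root_.map_one]
  have hTdet : (((Lq n)ᵀ).map (⇑(C : ℚ →+* ℚ[X]))).det
      = (((Lq n)).map (⇑(C : ℚ →+* ℚ[X]))).det := by
    rw [show ((Lq n)ᵀ).map (⇑(C : ℚ →+* ℚ[X])) = ((Lq n).map (⇑(C : ℚ →+* ℚ[X])))ᵀ from rfl]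
    exact Matrix.det_transpose _
  rw [hTdet, hLdet, hdet1, _root_.map_one, detTD_val (n+1), hFP]
  rw [show 2*(n+1)+1 = 2*n+3 by ring]
  ring

theorem catalan_linear_hankel_det_fib_poly (n : ℕ)
    (F : ℕ → Polynomial ℚ)
    (hF0 : F 0 = 0) (hF1 : F 1 = 1)
    (hF : ∀ m, F (m + 2) = X * F (m + 1) - F m) :
    (Matrix.of fun i j : Fin (n + 1) =>
        Polynomial.C (catalan ((i : ℕ) + (j : ℕ)) : ℚ) * X ^ 2
          - Polynomial.C (catalan ((i : ℕ) + (j : ℕ) + 1) : ℚ)).det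
      = Polynomial.C ((Matrix.of fun i j : Fin (n + 1) =>
          (catalan ((i : ℕ) + (j : ℕ)) : ℚ)).det) * F (2 * n + 3) :=
  catalan_linear_hankel_det_fib_poly_aux n F hF0 hF1 hF
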